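/- The union over finitely many η_i ∈ [0, π/2], pairwise separated by at least 2 arcsin(d/2), of product codes C_{1,i} × C_{2,i} scaled onto the leaves T_{η_i}, each with minimum distance at least d, is a spherical code in S^{2n-1} with minimum distance at least d, and its cardinality is Σ_i |C_{1,i}|·|C_{2,i}|. -/

import Mathlib

/-!
Points on distinct leaves `T_a`, `T_b` are at least as far apart as the points
`(cos a, sin a)` and `(cos b, sin b)` of the unit circle, because each coordinate block differs
by at least the difference of the norms `|cos a - cos b|`, resp. `|sin a - sin b|`. That chord
has length `2 sin (|a - b| / 2) ≥ d` once `|a - b| ≥ 2 arcsin (d / 2)`. Within a leaf the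
separation is assumed, so the whole code is `d`-separated; since `d > 0`, the parametrisation
by `(i, v₁, v₂)` is injective and the cardinality is the sum of the product cardinalities.
-/

open Real

noncomputable def concat {n : ℕ} (a b : EuclideanSpace ℝ (Fin n)) :
    WithLp 2 (EuclideanSpace ℝ (Fin n) × EuclideanSpace ℝ (Fin n)) :=
  (WithLp.equiv 2 (EuclideanSpace ℝ (Fin n) × EuclideanSpace ℝ (Fin n))).symm (a, b)

lemma dist_concat {n : ℕ} (a b c e : EuclideanSpace ℝ (Fin n)) :
    dist (concat a b) (concat c e) = √(dist a c ^ 2 + dist b e ^ 2) :=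
  WithLp.prod_dist_eq_of_L2 _ _

lemma norm_concat {n : ℕ} (a b : EuclideanSpace ℝ (Fin n)) :
    ‖concat a b‖ = √(‖a‖ ^ 2 + ‖b‖ ^ 2) :=
  WithLp.prod_norm_eq_of_L2 _

lemma norm_concat_cos_smul_sin_smul {n : ℕ} (θ : ℝ) {v w : EuclideanSpace ℝ (Fin n)}
    (hv : ‖v‖ = 1) (hw : ‖w‖ = 1) : ‖concat (cos θ • v) (sin θ • w)‖ = 1 := by
  rw [norm_concat, norm_smul, norm_smul, hv, hw, mul_one, mul_one, Real.norm_eq_abs,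
    Real.norm_eq_abs, sq_abs, sq_abs, cos_sq_add_sin_sq, sqrt_one]

lemma abs_sub_le_dist_smul_smul {E : Type*} [SeminormedAddCommGroup E] [NormedSpace ℝ E]
    {s t : ℝ} (hs : 0 ≤ s) (ht : 0 ≤ t) {u u' : E} (hu : ‖u‖ = 1) (hu' : ‖u'‖ = 1) :
    |s - t| ≤ dist (s • u) (t • u') := by
  simpa [norm_smul, hu, hu', abs_of_nonneg hs, abs_of_nonneg ht, dist_eq_norm]
    using abs_norm_sub_norm_le (s • u) (t • u')

lemma sq_cos_sub_cos_add_sq_sin_sub_sin (a b : ℝ) :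
    (cos a - cos b) ^ 2 + (sin a - sin b) ^ 2 = 2 - 2 * cos (a - b) := by
  rw [cos_sub]
  nlinarith [sin_sq_add_cos_sq a, sin_sq_add_cos_sq b]

lemma sq_le_two_sub_two_cos_of_two_arcsin_le {d t : ℝ} (hd₀ : 0 ≤ d) (hd₂ : d ≤ 2)
    (ht : 2 * arcsin (d / 2) ≤ |t|) (htπ : |t| ≤ π) : d ^ 2 ≤ 2 - 2 * cos t := by
  have hcos : cos (2 * arcsin (d / 2)) = 1 - d ^ 2 / 2 := by
    rw [cos_two_mul, cos_arcsin, sq_sqrt (by nlinarith)]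
    ring
  have harcsin : 0 ≤ 2 * arcsin (d / 2) := by
    linarith [arcsin_nonneg.2 (by linarith : (0 : ℝ) ≤ d / 2)]
  have := cos_le_cos_of_nonneg_of_le_pi harcsin htπ ht
  rw [cos_abs, hcos] at this
  linarith

lemma le_dist_concat_of_two_arcsin_le {n : ℕ} {d a b : ℝ} (hd₀ : 0 ≤ d) (hd₂ : d ≤ 2)
    (ha : a ∈ Set.Icc 0 (π / 2)) (hb : b ∈ Set.Icc 0 (π / 2))
    (hsep : 2 * arcsin (d / 2) ≤ |a - b|)
    {v₁ v₂ w₁ w₂ : EuclideanSpace ℝ (Fin n)}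
    (hv₁ : ‖v₁‖ = 1) (hv₂ : ‖v₂‖ = 1) (hw₁ : ‖w₁‖ = 1) (hw₂ : ‖w₂‖ = 1) :
    d ≤ dist (concat (cos a • v₁) (sin a • v₂)) (concat (cos b • w₁) (sin b • w₂)) := by
  have hcos : ∀ θ ∈ Set.Icc 0 (π / 2), 0 ≤ cos θ := fun θ hθ =>
    cos_nonneg_of_mem_Icc ⟨by linarith [hθ.1, pi_pos], hθ.2⟩
  have hsin : ∀ θ ∈ Set.Icc 0 (π / 2), 0 ≤ sin θ := fun θ hθ =>
    sin_nonneg_of_nonneg_of_le_pi hθ.1 (by linarith [hθ.2, pi_pos])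
  have h₁ := abs_sub_le_dist_smul_smul (hcos a ha) (hcos b hb) hv₁ hw₁
  have h₂ := abs_sub_le_dist_smul_smul (hsin a ha) (hsin b hb) hv₂ hw₂
  have hab : |a - b| ≤ π :=
    abs_sub_le_iff.2 ⟨by linarith [ha.2, hb.1, pi_pos], by linarith [ha.1, hb.2, pi_pos]⟩
  rw [dist_concat]
  refine le_sqrt_of_sq_le ?_
  calc d ^ 2 ≤ 2 - 2 * cos (a - b) := sq_le_two_sub_two_cos_of_two_arcsin_le hd₀ hd₂ hsep hab
    _ = |cos a - cos b| ^ 2 + |sin a - sin b| ^ 2 := by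
      rw [sq_abs, sq_abs, sq_cos_sub_cos_add_sq_sin_sub_sin]
    _ ≤ _ := by gcongr

lemma Set.injOn_of_le_dist {α β : Type*} [PseudoMetricSpace β] {f : α → β} {s : Set α}
    {d : ℝ} (hd : 0 < d) (h : ∀ x ∈ s, ∀ y ∈ s, x ≠ y → d ≤ dist (f x) (f y)) :
    Set.InjOn f s := by
  intro x hx y hy hxy
  by_contra hne
  have := h x hx y hy hne
  rw [hxy, dist_self] at this
  linarith

/-- The union over finitely many leaves `T_{η_i}`, pairwise separated by at least
`2 arcsin(d/2)`, of scaled product codes each with minimum distance at least `d`, is a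
spherical code in `S^{2n-1}` with minimum distance at least `d` and cardinality
`Σ_i |C₁ᵢ|·|C₂ᵢ|`. -/
theorem stmt10 (n : ℕ) (d : ℝ) (hd : d ∈ Set.Ioc 0 2) (ι : Type) [Fintype ι]
    (η : ι → ℝ) (hη : ∀ i, η i ∈ Set.Icc 0 (π / 2))
    (hsep : ∀ i j, i ≠ j → 2 * arcsin (d / 2) ≤ |η i - η j|)
    (C₁ C₂ : ι → Finset (EuclideanSpace ℝ (Fin n)))
    (hC₁ : ∀ i, ∀ v ∈ C₁ i, ‖v‖ = 1) (hC₂ : ∀ i, ∀ v ∈ C₂ i, ‖v‖ = 1)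
    (hleaf : ∀ i, ∀ v₁ ∈ C₁ i, ∀ v₂ ∈ C₂ i, ∀ w₁ ∈ C₁ i, ∀ w₂ ∈ C₂ i,
      (v₁, v₂) ≠ (w₁, w₂) →
      d ≤ dist (concat (cos (η i) • v₁) (sin (η i) • v₂))
               (concat (cos (η i) • w₁) (sin (η i) • w₂))) :
    (∀ x ∈ {x | ∃ i, ∃ v₁ ∈ C₁ i, ∃ v₂ ∈ C₂ i,
        x = concat (cos (η i) • v₁) (sin (η i) • v₂)}, ‖x‖ = 1) ∧
    (∀ x ∈ {x | ∃ i, ∃ v₁ ∈ C₁ i, ∃ v₂ ∈ C₂ i,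
        x = concat (cos (η i) • v₁) (sin (η i) • v₂)},
     ∀ y ∈ {x | ∃ i, ∃ v₁ ∈ C₁ i, ∃ v₂ ∈ C₂ i,
        x = concat (cos (η i) • v₁) (sin (η i) • v₂)},
      x ≠ y → d ≤ dist x y) ∧
    {x | ∃ i, ∃ v₁ ∈ C₁ i, ∃ v₂ ∈ C₂ i,
        x = concat (cos (η i) • v₁) (sin (η i) • v₂)}.ncard
      = ∑ i, (C₁ i).card * (C₂ i).card := by
  set P := Finset.univ.sigma fun i => C₁ i ×ˢ C₂ i
  have hP : ∀ {p}, p ∈ P ↔ p.2.1 ∈ C₁ p.1 ∧ p.2.2 ∈ C₂ p.1 := by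
    simp [P]
  set f : (Σ _ : ι, EuclideanSpace ℝ (Fin n) × EuclideanSpace ℝ (Fin n)) → _ :=
    fun p => concat (cos (η p.1) • p.2.1) (sin (η p.1) • p.2.2)
  have hcode : {x | ∃ i, ∃ v₁ ∈ C₁ i, ∃ v₂ ∈ C₂ i,
      x = concat (cos (η i) • v₁) (sin (η i) • v₂)} = f '' P := by
    ext x
    constructor
    · rintro ⟨i, v₁, hv₁, v₂, hv₂, rfl⟩
      exact ⟨⟨i, v₁, v₂⟩, hP.2 ⟨hv₁, hv₂⟩, rfl⟩
    · rintro ⟨⟨i, v₁, v₂⟩, hp, rfl⟩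
      exact ⟨i, v₁, (hP.1 hp).1, v₂, (hP.1 hp).2, rfl⟩
  have hfsep : ∀ p ∈ P, ∀ q ∈ P, p ≠ q → d ≤ dist (f p) (f q) := by
    rintro ⟨i, v₁, v₂⟩ hp ⟨j, w₁, w₂⟩ hq hpq
    obtain ⟨⟨hv₁, hv₂⟩, ⟨hw₁, hw₂⟩⟩ := And.intro (hP.1 hp) (hP.1 hq)
    by_cases hij : i = j
    · subst hij
      exact hleaf i v₁ hv₁ v₂ hv₂ w₁ hw₁ w₂ hw₂ fun h => hpq (by rw [h])
    · exact le_dist_concat_of_two_arcsin_le hd.1.le hd.2 (hη i) (hη j) (hsep i j hij)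
        (hC₁ i v₁ hv₁) (hC₂ i v₂ hv₂) (hC₁ j w₁ hw₁) (hC₂ j w₂ hw₂)
  rw [hcode]
  refine ⟨?_, ?_, ?_⟩
  · rintro _ ⟨⟨i, v₁, v₂⟩, hp, rfl⟩
    exact norm_concat_cos_smul_sin_smul _ (hC₁ i v₁ (hP.1 hp).1) (hC₂ i v₂ (hP.1 hp).2)
  · rintro _ ⟨p, hp, rfl⟩ _ ⟨q, hq, rfl⟩ hne
    exact hfsep p hp q hq (ne_of_apply_ne f hne)
  · rw [(Set.injOn_of_le_dist hd.1 hfsep).ncard_image, Set.ncard_coe_finset, Finset.card_sigma]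
    simp only [Finset.card_product]
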